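/- arXiv:1810.11228 — 8 statements merged into one kernel-verified Lean document; each statement's English description precedes it below -/
import Mathlib

section
/- Let A ∈ SL₂(ℝ) with A ≠ ±I and let 0 < α < π. Then A is conjugate in SL₂(ℝ) to the rotation matrix [[cos α, -sin α],[sin α, cos α]] if and only if tr A = 2 cos α and x ∧ Ax > 0 for every nonzero x ∈ ℝ². -/
open Matrix Real

abbrev SL2R := Matrix.SpecialLinearGroup (Fin 2) ℝ

def wedge (x y : Fin 2 → ℝ) : ℝ := x 0 * y 1 - x 1 * y 0

/-- Rotation matrix R(θ). -/
noncomputable def Rot (θ : ℝ) : Matrix (Fin 2) (Fin 2) ℝ :=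
  !![Real.cos θ, -Real.sin θ; Real.sin θ, Real.cos θ]

/-!
Since `x ∧ y` is the determinant of the matrix with columns `x, y`, conjugating `M` by
`g ∈ SL₂(ℝ)` turns `x ∧ (gMg⁻¹)x` into `y ∧ My` with `y = g⁻¹x`, and it preserves the trace.
For the rotation, `y ∧ R(α)y = sin α · |y|²`, which is positive for `0 < α < π`.

Conversely, `e₁ ∧ Ae₁ = c` is the lower left entry of `A`, so `c > 0`. The matrix `g` with
columns `t e₁` and `t (A - cos α) e₁ / sin α` satisfies `A g = g R(α)`: the first column is
built for this, and the second follows from Cayley–Hamilton. Its determinant is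
`t² c / sin α`, which is `1` for `t = √(sin α / c)`.
-/

lemma wedge_mulVec_mulVec (M : Matrix (Fin 2) (Fin 2) ℝ) (u v : Fin 2 → ℝ) :
    wedge (M *ᵥ u) (M *ᵥ v) = M.det * wedge u v := by
  simp only [wedge, mulVec, dotProduct, Fin.sum_univ_two, det_fin_two]
  ring

lemma wedge_rot_mulVec (θ : ℝ) (y : Fin 2 → ℝ) :
    wedge y (Rot θ *ᵥ y) = sin θ * (y 0 ^ 2 + y 1 ^ 2) := by
  simp only [wedge, Rot, mulVec, dotProduct, Fin.sum_univ_two, of_apply, cons_val', cons_val_zero,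
    cons_val_one, cons_val_fin_one]
  ring

lemma wedge_rot_mulVec_pos {θ : ℝ} (hθ : 0 < sin θ) {y : Fin 2 → ℝ} (hy : y ≠ 0) :
    0 < wedge y (Rot θ *ᵥ y) := by
  have hy' : y 0 ≠ 0 ∨ y 1 ≠ 0 := by
    contrapose! hy
    ext i; fin_cases i <;> simp [hy.1, hy.2]
  rw [wedge_rot_mulVec]
  refine mul_pos hθ ?_
  rcases hy' with h | h <;> positivity

lemma wedge_single_mulVec (M : Matrix (Fin 2) (Fin 2) ℝ) :
    wedge (Pi.single 0 1) (M *ᵥ Pi.single 0 1) = M 1 0 := by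
  simp [wedge]

namespace Matrix.SpecialLinearGroup

variable {n R : Type*} [DecidableEq n] [Fintype n] [CommRing R]

lemma coe_inv_mul_coe (g : SpecialLinearGroup n R) :
    (g⁻¹ : SpecialLinearGroup n R).val * g.val = 1 := by
  rw [← coe_mul, inv_mul_cancel, coe_one]

lemma coe_mul_coe_inv (g : SpecialLinearGroup n R) :
    g.val * (g⁻¹ : SpecialLinearGroup n R).val = 1 := by
  rw [← coe_mul, mul_inv_cancel, coe_one]

lemma trace_conj (g : SpecialLinearGroup n R) (M : Matrix n n R) :
    (g.val * M * (g⁻¹).val).trace = M.trace := by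
  rw [trace_mul_cycle, coe_inv_mul_coe, one_mul]

end Matrix.SpecialLinearGroup

lemma wedge_conj_mulVec (g : SL2R) (M : Matrix (Fin 2) (Fin 2) ℝ) (x : Fin 2 → ℝ) :
    wedge x ((g.val * M * (g⁻¹).val) *ᵥ x) = wedge ((g⁻¹).val *ᵥ x) (M *ᵥ ((g⁻¹).val *ᵥ x)) := by
  have hx : x = g.val *ᵥ ((g⁻¹).val *ᵥ x) := by
    rw [mulVec_mulVec, SpecialLinearGroup.coe_mul_coe_inv, one_mulVec]
  rw [Matrix.mul_assoc, ← mulVec_mulVec, ← mulVec_mulVec]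
  nth_rewrite 1 [hx]
  rw [wedge_mulVec_mulVec, g.prop, one_mul]

noncomputable def rotConjugator (M : Matrix (Fin 2) (Fin 2) ℝ) (θ t : ℝ) : Matrix (Fin 2) (Fin 2) ℝ :=
  !![t, t * (M 0 0 - cos θ) / sin θ; 0, t * M 1 0 / sin θ]

lemma det_rotConjugator (M : Matrix (Fin 2) (Fin 2) ℝ) (θ t : ℝ) :
    (rotConjugator M θ t).det = t ^ 2 * M 1 0 / sin θ := by
  rw [rotConjugator, det_fin_two_of]
  ring

lemma mul_rotConjugator {M : Matrix (Fin 2) (Fin 2) ℝ} {θ : ℝ} (hdet : M.det = 1)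
    (htr : M.trace = 2 * cos θ) (hθ : sin θ ≠ 0) (t : ℝ) :
    M * rotConjugator M θ t = rotConjugator M θ t * Rot θ := by
  rw [det_fin_two] at hdet
  rw [trace_fin_two] at htr
  have hpy := sin_sq_add_cos_sq θ
  rw [M.eta_fin_two, rotConjugator, Rot, mul_fin_two, mul_fin_two]
  ext i j
  fin_cases i <;> fin_cases j <;>
    simp only [Fin.zero_eta, Fin.mk_one, of_apply, cons_val', cons_val_zero, cons_val_one,
      cons_val_fin_one] <;> field_simp
  · ring
  · linear_combination t * M 0 0 * htr - t * hdet + t * hpy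
  · ring
  · linear_combination M 1 0 * t * htr

lemma exists_conj_eq_rot (M : SL2R) {θ : ℝ} (hθ : 0 < sin θ) (htr : M.val.trace = 2 * cos θ)
    (hc : 0 < M 1 0) : ∃ g : SL2R, M.val = g.val * Rot θ * (g⁻¹).val := by
  set t := √(sin θ / M 1 0)
  have hdet : (rotConjugator M θ t).det = 1 := by
    rw [det_rotConjugator, sq_sqrt (by positivity)]
    field_simp
  let g : SL2R := ⟨rotConjugator M θ t, hdet⟩
  refine ⟨g, ?_⟩
  calc M.val = M.val * g.val * (g⁻¹).val := by
        rw [Matrix.mul_assoc, SpecialLinearGroup.coe_mul_coe_inv, Matrix.mul_one]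
    _ = g.val * Rot θ * (g⁻¹).val := by rw [mul_rotConjugator M.prop htr hθ.ne']

theorem conj_rotation_iff_general (A : SL2R)
    (α : ℝ) (hα0 : 0 < α) (hαπ : α < π) :
    (∃ g : SL2R, A.val = g.val * Rot α * (g⁻¹).val) ↔
      (A.val.trace = 2 * Real.cos α ∧
        ∀ x : Fin 2 → ℝ, x ≠ 0 → 0 < wedge x (A.val.mulVec x)) := by
  have hsin : 0 < sin α := sin_pos_of_pos_of_lt_pi hα0 hαπ
  constructor
  · rintro ⟨g, hg⟩
    refine ⟨by rw [hg, SpecialLinearGroup.trace_conj, Rot, trace_fin_two_of]; ring, fun x hx => ?_⟩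
    rw [hg, wedge_conj_mulVec]
    refine wedge_rot_mulVec_pos hsin fun h => hx ?_
    rw [← one_mulVec x, ← SpecialLinearGroup.coe_mul_coe_inv g, ← mulVec_mulVec, h, mulVec_zero]
  · rintro ⟨htr, hpos⟩
    refine exists_conj_eq_rot A hsin htr ?_
    have := hpos (Pi.single 0 1) (by simp)
    rwa [wedge_single_mulVec] at this

theorem conj_rotation_iff (A : SL2R) (hA1 : A ≠ 1) (hA2 : A ≠ -1)
    (α : ℝ) (hα0 : 0 < α) (hαπ : α < π) :
    (∃ g : SL2R, A.val = g.val * Rot α * (g⁻¹).val) ↔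
      (A.val.trace = 2 * Real.cos α ∧
        ∀ x : Fin 2 → ℝ, x ≠ 0 → 0 < wedge x (A.val.mulVec x)) :=
  conj_rotation_iff_general A α hα0 hαπ
end

section
/- Let A, B ∈ SL₂(ℝ). Suppose tr A = 2 cos α for some α ∈ [0, π] and x ∧ Ax ≥ 0 for all x ∈ ℝ², and suppose B has a real eigenvector with positive eigenvalue that is not an eigenvector of A. Then there exists a vector v ∈ ℝ² with v ∧ (AB)v > 0; in particular AB is not equal to ±I, and AB does not satisfy x ∧ (AB)x ≤ 0 for all x. -/
open Matrix Real

/-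
Since B v = λ v with λ > 0, we get v ∧ (AB)v = λ (v ∧ Av). This is ≥ 0 by hypothesis on A,
and it vanishes only if Av is parallel to v, i.e. if v is an eigenvector of A.
Hence v ∧ (AB)v > 0, whereas x ∧ ±x = 0 for every x.
-/

theorem wedge_smul_right (x y : Fin 2 → ℝ) (c : ℝ) : wedge x (c • y) = c * wedge x y := by
  simp only [wedge, Pi.smul_apply, smul_eq_mul]
  ring

theorem wedge_smul_self (x : Fin 2 → ℝ) (c : ℝ) : wedge x (c • x) = 0 := by
  rw [wedge_smul_right, wedge, mul_comm (x 0), sub_self, mul_zero]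

theorem exists_eq_smul_of_wedge_eq_zero {x y : Fin 2 → ℝ} (hx : x ≠ 0) (h : wedge x y = 0) :
    ∃ μ : ℝ, y = μ • x := by
  have hcross : x 0 * y 1 = x 1 * y 0 := sub_eq_zero.mp h
  obtain ⟨i, hi⟩ := Function.ne_iff.mp hx
  refine ⟨y i / x i, funext fun j => ?_⟩
  simp only [Pi.zero_apply] at hi
  simp only [Pi.smul_apply, smul_eq_mul]
  fin_cases i <;> fin_cases j <;> simp at hi ⊢ <;> field_simp <;> linarith

theorem wedge_mulVec_pos_of_not_eigenvector {M : Matrix (Fin 2) (Fin 2) ℝ}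
    (hM : ∀ x : Fin 2 → ℝ, 0 ≤ wedge x (M.mulVec x)) {v : Fin 2 → ℝ} (hv : v ≠ 0)
    (hnot : ¬ ∃ μ : ℝ, M.mulVec v = μ • v) : 0 < wedge v (M.mulVec v) :=
  (hM v).lt_of_ne fun h => hnot (exists_eq_smul_of_wedge_eq_zero hv h.symm)

theorem SL2R.ne_smul_one_of_wedge_pos {M : SL2R} {w : Fin 2 → ℝ}
    (hw : 0 < wedge w (M.val.mulVec w)) (c : ℝ) : M.val ≠ c • 1 := by
  intro hM
  rw [hM, smul_mulVec, one_mulVec, wedge_smul_self] at hw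
  exact hw.false

theorem lemma_product_positive_wedge_general (A B : SL2R)
    (hwA : ∀ x : Fin 2 → ℝ, 0 ≤ wedge x (A.val.mulVec x))
    (v : Fin 2 → ℝ) (hv : v ≠ 0) (lam : ℝ) (hlam : 0 < lam)
    (hBv : B.val.mulVec v = lam • v)
    (hnotA : ¬ ∃ μ : ℝ, A.val.mulVec v = μ • v) :
    (∃ w : Fin 2 → ℝ, 0 < wedge w ((A * B).val.mulVec w)) ∧
    A * B ≠ 1 ∧ A * B ≠ -1 ∧
    ¬ (∀ x : Fin 2 → ℝ, wedge x ((A * B).val.mulVec x) ≤ 0) := by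
  have hABv : (A * B).val.mulVec v = lam • A.val.mulVec v := by
    rw [show (A * B).val = A.val * B.val from rfl, ← mulVec_mulVec, hBv, mulVec_smul]
  have hpos : 0 < wedge v ((A * B).val.mulVec v) := by
    rw [hABv, wedge_smul_right]
    exact mul_pos hlam (wedge_mulVec_pos_of_not_eigenvector hwA hv hnotA)
  refine ⟨⟨v, hpos⟩, fun h => ?_, fun h => ?_, fun h => (h v).not_gt hpos⟩
  · exact SL2R.ne_smul_one_of_wedge_pos hpos 1 (by rw [h, one_smul]; rfl)
  · exact SL2R.ne_smul_one_of_wedge_pos hpos (-1) (by rw [h, neg_one_smul]; rfl)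

theorem lemma_product_positive_wedge (A B : SL2R) (α : ℝ)
    (hα : α ∈ Set.Icc 0 π)
    (htr : A.val.trace = 2 * Real.cos α)
    (hwA : ∀ x : Fin 2 → ℝ, 0 ≤ wedge x (A.val.mulVec x))
    (v : Fin 2 → ℝ) (hv : v ≠ 0) (lam : ℝ) (hlam : 0 < lam)
    (hBv : B.val.mulVec v = lam • v)
    (hnotA : ¬ ∃ μ : ℝ, A.val.mulVec v = μ • v) :
    (∃ w : Fin 2 → ℝ, 0 < wedge w ((A * B).val.mulVec w)) ∧
    A * B ≠ 1 ∧ A * B ≠ -1 ∧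
    ¬ (∀ x : Fin 2 → ℝ, wedge x ((A * B).val.mulVec x) ≤ 0) :=
  lemma_product_positive_wedge_general A B hwA v hv lam hlam hBv hnotA
end

section
/- Let 0 < α, β < π, let A ∈ C₃^α and B ∈ C₃^β, and suppose tr(AB) = 2 cos(α+β). Then AB ∈ C₃^{α+β}; i.e., AB is conjugate in SL₂(ℝ) to the rotation matrix R(α+β). -/
open Matrix Real

/-- The conjugacy class C₃^θ of the rotation R(θ) in SL₂(ℝ). -/
noncomputable def C3 (θ : ℝ) : Set SL2R :=
  {A | ∃ g : SL2R, A.val = g.val * Rot θ * (g⁻¹).val}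

/-! Conjugating, we may take `A = R(α)` and `B = k R(β) k⁻¹`. For `k = [[a, b], [c, d]]`,
`tr(AB) = 2 cos(α + β) det k - sin α sin β ((a - d)² + (b + c)²)`, so when `sin α sin β > 0`
the trace condition forces `d = a` and `c = -b`. Such a `k` commutes with `R(β)`, hence
`B = R(β)` and `AB = R(α) R(β) = R(α + β)` up to the same conjugation. -/

lemma Rot_mul_Rot (θ₁ θ₂ : ℝ) : Rot θ₁ * Rot θ₂ = Rot (θ₁ + θ₂) := by
  simp only [Rot, mul_fin_two, cos_add, sin_add]
  congr 1; ring_nf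

lemma det_Rot (θ : ℝ) : (Rot θ).det = 1 := by
  simp [Rot, det_fin_two_of, ← sq]

lemma trace_Rot_mul_conj_Rot (α β : ℝ) (k : Matrix (Fin 2) (Fin 2) ℝ) :
    (Rot α * (k * Rot β * adjugate k)).trace =
      2 * cos (α + β) * k.det - sin α * sin β * ((k 0 0 - k 1 1) ^ 2 + (k 0 1 + k 1 0) ^ 2) := by
  rw [eta_fin_two k]
  simp [Rot, adjugate_fin_two_of, det_fin_two_of, trace_fin_two_of, cos_add]
  ring

lemma commute_Rot (θ : ℝ) {k : Matrix (Fin 2) (Fin 2) ℝ} (hd : k 1 1 = k 0 0)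
    (hc : k 1 0 = -k 0 1) : Commute k (Rot θ) := by
  rw [Commute, SemiconjBy, eta_fin_two k, hd, hc]
  ext i j; fin_cases i <;> fin_cases j <;> simp [Rot] <;> ring

noncomputable def rotSL (θ : ℝ) : SL2R := ⟨Rot θ, det_Rot θ⟩

lemma rotSL_mul_rotSL (θ₁ θ₂ : ℝ) : rotSL θ₁ * rotSL θ₂ = rotSL (θ₁ + θ₂) :=
  Subtype.ext (Rot_mul_Rot θ₁ θ₂)

lemma mem_C3_iff {θ : ℝ} {A : SL2R} : A ∈ C3 θ ↔ ∃ g : SL2R, A = g * rotSL θ * g⁻¹ :=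
  exists_congr fun _ => ⟨fun h => Subtype.ext h, fun h => congrArg Subtype.val h⟩

lemma trace_val_conj (g x : SL2R) : (g * x * g⁻¹).val.trace = x.val.trace := by
  change (g.val * x.val * adjugate g.val).trace = _
  rw [trace_mul_cycle, adjugate_mul, g.2, one_smul, one_mul]

lemma commute_rotSL_of_trace_eq {α β : ℝ} (hαβ : 0 < sin α * sin β) (k : SL2R)
    (htr : (rotSL α * (k * rotSL β * k⁻¹)).val.trace = 2 * cos (α + β)) :
    Commute k (rotSL β) := by
  have hsq : (k 0 0 - k 1 1) ^ 2 + (k 0 1 + k 1 0) ^ 2 = 0 := by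
    have := trace_Rot_mul_conj_Rot α β k
    change (Rot α * (k.val * Rot β * adjugate k.val)).trace = _ at htr
    rw [k.2, htr] at this
    exact (mul_eq_zero.1 (by linarith)).resolve_left hαβ.ne'
  obtain ⟨hd, hc⟩ := (add_eq_zero_iff_of_nonneg (sq_nonneg _) (sq_nonneg _)).1 hsq
  rw [pow_eq_zero_iff two_ne_zero, sub_eq_zero] at hd
  rw [pow_eq_zero_iff two_ne_zero, add_eq_zero_iff_eq_neg'] at hc
  exact Subtype.ext (commute_Rot β hd.symm hc)

theorem prod_mem_C3_add (α β : ℝ) (hα : α ∈ Set.Ioo 0 π) (hβ : β ∈ Set.Ioo 0 π)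
    (A B : SL2R) (hA : A ∈ C3 α) (hB : B ∈ C3 β)
    (htr : (A * B).val.trace = 2 * Real.cos (α + β)) :
    A * B ∈ C3 (α + β) := by
  obtain ⟨g, rfl⟩ := mem_C3_iff.1 hA
  obtain ⟨h, rfl⟩ := mem_C3_iff.1 hB
  have hAB : g * rotSL α * g⁻¹ * (h * rotSL β * h⁻¹)
      = g * (rotSL α * ((g⁻¹ * h) * rotSL β * (g⁻¹ * h)⁻¹)) * g⁻¹ := by group
  rw [hAB, trace_val_conj] at htr
  have hsin : 0 < sin α * sin β :=
    mul_pos (sin_pos_of_pos_of_lt_pi hα.1 hα.2) (sin_pos_of_pos_of_lt_pi hβ.1 hβ.2)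
  rw [hAB, (commute_rotSL_of_trace_eq hsin _ htr).eq, mul_inv_cancel_right, rotSL_mul_rotSL]
  exact mem_C3_iff.2 ⟨g, rfl⟩
end

section
/- In SL₂(ℝ): {tr(AB) : A, B ∈ C₂^{++}} = (-∞, 2], {tr(AB) : A, B ∈ C₂^{+-}} = (-∞, 2], and {tr(AB) : A ∈ C₂^{++}, B ∈ C₂^{+-}} = [2, ∞). -/
open Matrix

def C2pp : Set SL2R := {A | ∃ g : SL2R, A.val = g.val * !![1, 0; 1, 1] * (g⁻¹).val}

def C2pm : Set SL2R := {A | ∃ g : SL2R, A.val = g.val * !![1, 0; -1, 1] * (g⁻¹).val}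

/-!
Conjugating the second factor back by the first, `tr(g uₛ g⁻¹ · h uₜ h⁻¹) = tr(uₛ · M uₜ M⁻¹)`
with `M = g⁻¹ h` and `uₛ = [[1,0],[s,1]]`, and a direct computation gives `2 - s t b²`, where `b` is
the upper right entry of `M`. Every `b` occurs (take `M = [[1,b],[0,1]]`), so the traces fill out
`2 - s t · [0, ∞)`: the half-line `(-∞, 2]` when `s t = 1` and `[2, ∞)` when `s t = -1`.
-/

namespace Matrix.SpecialLinearGroup

variable {R : Type*} [CommRing R]

def lowerUnipotentConjugates (s : R) : Set (SpecialLinearGroup (Fin 2) R) :=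
  {A | ∃ g : SpecialLinearGroup (Fin 2) R, A.val = g.val * !![1, 0; s, 1] * (g⁻¹).val}

def lowerUnipotent (s : R) : SpecialLinearGroup (Fin 2) R :=
  ⟨!![1, 0; s, 1], by simp [det_fin_two]⟩

def upperUnipotent (b : R) : SpecialLinearGroup (Fin 2) R :=
  ⟨!![1, b; 0, 1], by simp [det_fin_two]⟩

theorem trace_lowerUnipotent_mul_conj (s t : R) (M : SpecialLinearGroup (Fin 2) R) :
    (!![1, 0; s, 1] * (M.val * !![1, 0; t, 1] * (M⁻¹).val)).trace = 2 - s * t * M.val 0 1 ^ 2 := by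
  have hdet : M.val 0 0 * M.val 1 1 - M.val 0 1 * M.val 1 0 = 1 := by
    rw [← det_fin_two]; exact M.det_coe
  conv_lhs => rw [coe_inv, eta_fin_two M.val, adjugate_fin_two_of]
  simp only [mul_fin_two, trace_fin_two_of]
  linear_combination 2 * hdet

theorem trace_conj_lowerUnipotent_mul_conj (s t : R) (g h : SpecialLinearGroup (Fin 2) R) :
    (g.val * !![1, 0; s, 1] * (g⁻¹).val * (h.val * !![1, 0; t, 1] * (h⁻¹).val)).trace
      = 2 - s * t * (g⁻¹ * h).val 0 1 ^ 2 := by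
  rw [← trace_lowerUnipotent_mul_conj, _root_.mul_inv_rev, inv_inv, coe_mul, coe_mul, mul_assoc,
    mul_assoc, trace_mul_comm]
  congr 1
  noncomm_ring

theorem trace_lowerUnipotentConjugates_mul (s t : R) :
    {τ : R | ∃ A ∈ lowerUnipotentConjugates s, ∃ B ∈ lowerUnipotentConjugates t,
      τ = (A * B).val.trace} = Set.range fun b : R => 2 - s * t * b ^ 2 := by
  ext τ
  constructor
  · rintro ⟨A, ⟨g, hA⟩, B, ⟨h, hB⟩, rfl⟩
    refine ⟨(g⁻¹ * h).val 0 1, ?_⟩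
    show 2 - s * t * _ ^ 2 = _
    rw [← trace_conj_lowerUnipotent_mul_conj, ← hA, ← hB]
    rfl
  · rintro ⟨b, rfl⟩
    let n := upperUnipotent b
    refine ⟨lowerUnipotent s, ⟨1, by simp [lowerUnipotent]⟩, n * lowerUnipotent t * n⁻¹, ⟨n, rfl⟩,
      ?_⟩
    show _ = (!![1, 0; s, 1] * (n.val * !![1, 0; t, 1] * (n⁻¹).val)).trace
    rw [trace_lowerUnipotent_mul_conj]
    rfl

end Matrix.SpecialLinearGroup

theorem range_sub_mul_sq_of_pos {a c : ℝ} (hc : 0 < c) :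
    (Set.range fun b : ℝ => a - c * b ^ 2) = Set.Iic a := by
  ext τ
  refine ⟨?_, fun hτ => ⟨√((a - τ) / c), ?_⟩⟩
  · rintro ⟨b, rfl⟩
    simp only [Set.mem_Iic]
    nlinarith [sq_nonneg b]
  · have hτ' : 0 ≤ (a - τ) / c := div_nonneg (sub_nonneg.2 hτ) hc.le
    simp only [Real.sq_sqrt hτ', mul_div_cancel₀ _ hc.ne']
    ring

theorem range_sub_mul_sq_of_neg {a c : ℝ} (hc : c < 0) :
    (Set.range fun b : ℝ => a - c * b ^ 2) = Set.Ici a := by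
  ext τ
  refine ⟨?_, fun hτ => ⟨√((a - τ) / c), ?_⟩⟩
  · rintro ⟨b, rfl⟩
    simp only [Set.mem_Ici]
    nlinarith [sq_nonneg b]
  · have hτ' : 0 ≤ (a - τ) / c := div_nonneg_of_nonpos (sub_nonpos.2 hτ) hc.le
    simp only [Real.sq_sqrt hτ', mul_div_cancel₀ _ hc.ne]
    ring

theorem trace_range_C2_mul_C2 :
    {t : ℝ | ∃ A ∈ C2pp, ∃ B ∈ C2pp, t = (A * B).val.trace} = Set.Iic 2 ∧
    {t : ℝ | ∃ A ∈ C2pm, ∃ B ∈ C2pm, t = (A * B).val.trace} = Set.Iic 2 ∧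
    {t : ℝ | ∃ A ∈ C2pp, ∃ B ∈ C2pm, t = (A * B).val.trace} = Set.Ici 2 := by
  have hpp : C2pp = SpecialLinearGroup.lowerUnipotentConjugates (1 : ℝ) := rfl
  have hpm : C2pm = SpecialLinearGroup.lowerUnipotentConjugates (-1 : ℝ) := rfl
  simp only [hpp, hpm, SpecialLinearGroup.trace_lowerUnipotentConjugates_mul]
  exact ⟨range_sub_mul_sq_of_pos (by norm_num), range_sub_mul_sq_of_pos (by norm_num),
    range_sub_mul_sq_of_neg (by norm_num)⟩
end

section
/- Let A ∈ SL₂(ℝ) with |tr A| > 2. Then for any real numbers t₁, t₂ there exist B, C ∈ SL₂(ℝ) with tr B = t₁, tr C = t₂, and AB = C. -/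
/-!
The conditions `tr B = t₁` and `tr (A * B) = t₂` are linear in `B`. Since `A` is hyperbolic, the
trace form `(X, Y) ↦ tr (X * Y)` is nondegenerate on `span {1, A}`, so they determine the
component of `B` in that span, `x • 1 + y • A`, and leave `B = x • 1 + y • A + K` free in the plane
of matrices `K` trace-orthogonal to `1` and `A`. On this plane `det` adds to
`det (x • 1 + y • A)`, and it is an indefinite quadratic form: the commutators `⁅A, J⁆` and
`⁅A, ⁅A, J⁆⁆` with the rotation `J` lie in it and have determinants of opposite signs. Rescaling
one of them makes `det B = 1`.
-/

open Matrix

namespace Matrix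

section CommRing

variable {R : Type*} [CommRing R]

theorem det_fin_two_add (X Y : Matrix (Fin 2) (Fin 2) R) :
    (X + Y).det = X.det + Y.det + X.trace * Y.trace - (X * Y).trace := by
  simp only [det_fin_two, trace_fin_two, add_apply, mul_apply, Fin.sum_univ_two]
  ring

theorem det_fin_two_add_of_trace_eq_zero {X K : Matrix (Fin 2) (Fin 2) R}
    (hK : K.trace = 0) (hXK : (X * K).trace = 0) : (X + K).det = X.det + K.det := by
  rw [det_fin_two_add, hK, hXK]
  ring

theorem trace_mul_self_fin_two (A : Matrix (Fin 2) (Fin 2) R) :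
    (A * A).trace = A.trace ^ 2 - 2 * A.det := by
  simp only [det_fin_two, trace_fin_two, mul_apply, Fin.sum_univ_two]
  ring

theorem trace_lie {n : Type*} [Fintype n] [DecidableEq n] (A X : Matrix n n R) :
    ⁅A, X⁆.trace = 0 := by
  rw [Ring.lie_def, trace_sub, trace_mul_comm, sub_self]

theorem trace_mul_lie_self {n : Type*} [Fintype n] [DecidableEq n] (A X : Matrix n n R) :
    (A * ⁅A, X⁆).trace = 0 := by
  rw [Ring.lie_def, mul_sub, trace_sub, trace_mul_comm A (A * X), Matrix.mul_assoc, sub_self]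

-- `det ⁅Y, Z⁆ = 4 det Y det Z - tr (Y Z) ^ 2` for traceless `Y`, `Z`, applied to the traceless
-- parts of `A` and `⁅A, X⁆`, which are trace-orthogonal.
theorem det_lie_lie (A X : Matrix (Fin 2) (Fin 2) R) :
    ⁅A, ⁅A, X⁆⁆.det = (4 * A.det - A.trace ^ 2) * ⁅A, X⁆.det := by
  simp only [Ring.lie_def, det_fin_two, trace_fin_two, sub_apply, mul_apply, Fin.sum_univ_two]
  ring

theorem det_lie_rotation (A : Matrix (Fin 2) (Fin 2) R) :
    ⁅A, !![0, 1; -1, 0]⁆.det = 4 * A.det - A.trace ^ 2 - (A 1 0 - A 0 1) ^ 2 := by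
  simp only [Ring.lie_def, det_fin_two, trace_fin_two, sub_apply, mul_apply, Fin.sum_univ_two,
    of_apply, cons_val', cons_val_zero, cons_val_one, cons_val_fin_one]
  ring

end CommRing

theorem exists_trace_eq_trace_mul_eq {F : Type*} [Field F] (A : Matrix (Fin 2) (Fin 2) F)
    (hA : A.trace ^ 2 ≠ 4 * A.det) (t₁ t₂ : F) :
    ∃ x y : F, (x • 1 + y • A).trace = t₁ ∧ (A * (x • 1 + y • A)).trace = t₂ := by
  have hA' : A.trace ^ 2 - 4 * A.det ≠ 0 := sub_ne_zero.mpr hA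
  refine ⟨(t₁ * (A.trace ^ 2 - 2 * A.det) - A.trace * t₂) / (A.trace ^ 2 - 4 * A.det),
    (2 * t₂ - A.trace * t₁) / (A.trace ^ 2 - 4 * A.det), ?_, ?_⟩
  · simp only [trace_add, trace_smul, trace_one, Fintype.card_fin, smul_eq_mul, Nat.cast_ofNat]
    linear_combination t₁ * mul_inv_cancel₀ hA'
  · simp only [mul_add, Matrix.mul_smul, mul_one, trace_add, trace_smul, trace_mul_self_fin_two,
      smul_eq_mul]
    linear_combination t₂ * mul_inv_cancel₀ hA'

theorem exists_smul_det_eq {K : Matrix (Fin 2) (Fin 2) ℝ} {m : ℝ} (hK : K.det ≠ 0)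
    (hm : 0 ≤ m / K.det) : ∃ c : ℝ, (c • K).det = m :=
  ⟨√(m / K.det), by rw [det_smul, Fintype.card_fin, Real.sq_sqrt hm, div_mul_cancel₀ _ hK]⟩

theorem exists_trace_eq_zero_trace_mul_eq_zero_det_eq (A : Matrix (Fin 2) (Fin 2) ℝ)
    (hA : 4 * A.det < A.trace ^ 2) (m : ℝ) :
    ∃ K : Matrix (Fin 2) (Fin 2) ℝ, K.trace = 0 ∧ (A * K).trace = 0 ∧ K.det = m := by
  set J : Matrix (Fin 2) (Fin 2) ℝ := !![0, 1; -1, 0]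
  have hneg : ⁅A, J⁆.det < 0 := by
    rw [det_lie_rotation]
    nlinarith [sq_nonneg (A 1 0 - A 0 1)]
  have hpos : 0 < ⁅A, ⁅A, J⁆⁆.det := by
    rw [det_lie_lie]
    exact mul_pos_of_neg_of_neg (by linarith) hneg
  obtain ⟨X, hX, hm⟩ : ∃ X : Matrix (Fin 2) (Fin 2) ℝ, ⁅A, X⁆.det ≠ 0 ∧ 0 ≤ m / ⁅A, X⁆.det := by
    rcases le_or_gt 0 m with hm | hm
    · exact ⟨⁅A, J⁆, hpos.ne', div_nonneg hm hpos.le⟩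
    · exact ⟨J, hneg.ne, div_nonneg_of_nonpos hm.le hneg.le⟩
  obtain ⟨c, hc⟩ := exists_smul_det_eq hX hm
  exact ⟨c • ⁅A, X⁆, by rw [trace_smul, trace_lie, smul_zero],
    by rw [Matrix.mul_smul, trace_smul, trace_mul_lie_self, smul_zero], hc⟩

end Matrix

theorem exists_factor_with_traces (A : SL2R) (hA : 2 < |A.val.trace|)
    (t₁ t₂ : ℝ) :
    ∃ B C : SL2R, B.val.trace = t₁ ∧ C.val.trace = t₂ ∧ A * B = C := by
  have hA' : 4 * A.val.det < A.val.trace ^ 2 := by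
    rw [A.det_coe, ← sq_abs]
    nlinarith
  obtain ⟨x, y, htr, htrA⟩ := exists_trace_eq_trace_mul_eq A.val hA'.ne' t₁ t₂
  set X := x • (1 : Matrix (Fin 2) (Fin 2) ℝ) + y • A.val
  obtain ⟨K, hK, hAK, hdet⟩ :=
    exists_trace_eq_zero_trace_mul_eq_zero_det_eq A.val hA' (1 - X.det)
  have hXK : (X * K).trace = 0 := by
    simp only [X, add_mul, smul_mul, one_mul, trace_add, trace_smul, hK, hAK, smul_zero,
      add_zero]
  have hB : (X + K).det = 1 := by
    rw [det_fin_two_add_of_trace_eq_zero hK hXK, hdet]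
    ring
  refine ⟨⟨X + K, hB⟩, A * ⟨X + K, hB⟩, ?_, ?_, rfl⟩
  · change (X + K).trace = t₁
    rw [trace_add, htr, hK, add_zero]
  · change (A.val * (X + K)).trace = t₂
    rw [Matrix.mul_add, trace_add, htrA, hAK, add_zero]
end

section
/- Let 0 < α, β < π with α + β < π, let A ∈ C₃^α, B ∈ C₃^β. Then AB is not conjugate in SL₂(ℝ) to any rotation R(γ) with π < γ < 2π, and AB ∉ {I, -I}. Moreover if AB is conjugate to R(γ) with 0 < γ < π, then γ ≥ α + β. -/
open Matrix Real

/-!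
For a real 2 × 2 matrix `X` the pair `(trace X, skewTrace X)` is, read as `trace X + i skewTrace X`,
twice the `ℂ`-linear part of `X`, so left multiplication by `R(α)` rotates it by `α`. On `C₃^θ` it
equals `(2 cos θ, sin θ ‖g‖²)`, where `‖g‖² ≥ 2` is the squared Frobenius norm of a conjugator
`g ∈ SL₂(ℝ)`; thus `skewTrace` has the sign of `sin θ`. Conjugating `A` to `R(α)` turns `AB` into
`R(α) N` with `N ∈ C₃^β`. Then `trace (AB) ≤ 2 cos (α + β) < 2`, which excludes `I` and bounds `γ`
below, and whenever `trace (AB) ≥ -2` the skew trace is positive, which excludes `-I` (skew trace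
`0`) and rotations by `γ ∈ (π, 2π)` (negative skew trace).
-/

def skewTrace (X : Matrix (Fin 2) (Fin 2) ℝ) : ℝ := X 1 0 - X 0 1

lemma trace_Rot_mul (α : ℝ) (X : Matrix (Fin 2) (Fin 2) ℝ) :
    trace (Rot α * X) = cos α * trace X - sin α * skewTrace X := by
  rw [eta_fin_two X]
  simp [Rot, skewTrace, trace_fin_two]
  ring

lemma skewTrace_Rot_mul (α : ℝ) (X : Matrix (Fin 2) (Fin 2) ℝ) :
    skewTrace (Rot α * X) = sin α * trace X + cos α * skewTrace X := by
  rw [eta_fin_two X]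
  simp [Rot, skewTrace, trace_fin_two]
  ring

lemma trace_mul_Rot_mul_adjugate (g : Matrix (Fin 2) (Fin 2) ℝ) (θ : ℝ) :
    trace (g * Rot θ * adjugate g) = 2 * cos θ * g.det := by
  simp [Rot, Matrix.trace_fin_two, Matrix.mul_apply, Fin.sum_univ_two, adjugate_fin_two,
    det_fin_two]
  ring

lemma skewTrace_mul_Rot_mul_adjugate (g : Matrix (Fin 2) (Fin 2) ℝ) (θ : ℝ) :
    skewTrace (g * Rot θ * adjugate g) =
      sin θ * (g 0 0 ^ 2 + g 0 1 ^ 2 + g 1 0 ^ 2 + g 1 1 ^ 2) := by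
  simp [Rot, skewTrace, Matrix.mul_apply, Fin.sum_univ_two, adjugate_fin_two]
  ring

lemma two_le_sum_sq_of_det_eq_one {g : Matrix (Fin 2) (Fin 2) ℝ} (hg : g.det = 1) :
    2 ≤ g 0 0 ^ 2 + g 0 1 ^ 2 + g 1 0 ^ 2 + g 1 1 ^ 2 := by
  rw [det_fin_two] at hg
  nlinarith [sq_nonneg (g 0 0 - g 1 1), sq_nonneg (g 0 1 + g 1 0)]

lemma val_inv_eq_adjugate (g : SL2R) : (g⁻¹).val = adjugate g.val :=
  Matrix.SpecialLinearGroup.coe_inv g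

lemma conj_mem_C3 {θ : ℝ} {A : SL2R} (hA : A ∈ C3 θ) (g : SL2R) : g * A * g⁻¹ ∈ C3 θ := by
  obtain ⟨k, hk⟩ := hA
  exact ⟨g * k, by simp [hk, Matrix.mul_assoc]⟩

lemma val_inv_mul_mul_of_val_eq {X : Matrix (Fin 2) (Fin 2) ℝ} {A g : SL2R}
    (hA : A.val = g.val * X * (g⁻¹).val) : (g⁻¹ * A * g).val = X := by
  have hinv : (g⁻¹).val * g.val = 1 := congrArg Subtype.val (inv_mul_cancel g)
  calc (g⁻¹ * A * g).val = (g⁻¹).val * (g.val * X * (g⁻¹).val) * g.val := by rw [← hA]; rfl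
    _ = (g⁻¹).val * g.val * X * ((g⁻¹).val * g.val) := by simp only [Matrix.mul_assoc]
    _ = X := by rw [hinv, Matrix.one_mul, Matrix.mul_one]

lemma trace_eq_of_mem_C3 {θ : ℝ} {A : SL2R} (hA : A ∈ C3 θ) : trace A.val = 2 * cos θ := by
  obtain ⟨g, hg⟩ := hA
  rw [hg, val_inv_eq_adjugate, trace_mul_Rot_mul_adjugate, g.2, mul_one]

lemma exists_skewTrace_eq_of_mem_C3 {θ : ℝ} {A : SL2R} (hA : A ∈ C3 θ) :
    ∃ c, 2 ≤ c ∧ skewTrace A.val = sin θ * c := by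
  obtain ⟨g, hg⟩ := hA
  rw [hg, val_inv_eq_adjugate, skewTrace_mul_Rot_mul_adjugate]
  exact ⟨_, two_le_sum_sq_of_det_eq_one g.2, rfl⟩

section Product

variable {α β : ℝ} {N : SL2R}

lemma trace_Rot_mul_le (hα : 0 ≤ sin α) (hβ : 0 ≤ sin β) (hN : N ∈ C3 β) :
    trace (Rot α * N.val) ≤ 2 * cos (α + β) := by
  obtain ⟨c, hc, hskew⟩ := exists_skewTrace_eq_of_mem_C3 hN
  rw [trace_Rot_mul, trace_eq_of_mem_C3 hN, hskew, cos_add]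
  nlinarith [mul_nonneg (mul_nonneg hα hβ) (sub_nonneg.2 hc)]

lemma skewTrace_Rot_mul_pos (hα : α ∈ Set.Ioo 0 π) (hβ : β ∈ Set.Ioo 0 π) (hsum : α + β < π)
    (hN : N ∈ C3 β) (htr : -2 ≤ trace (Rot α * N.val)) : 0 < skewTrace (Rot α * N.val) := by
  obtain ⟨c, hc, hskew⟩ := exists_skewTrace_eq_of_mem_C3 hN
  rw [trace_Rot_mul, trace_eq_of_mem_C3 hN, hskew] at htr
  rw [skewTrace_Rot_mul, trace_eq_of_mem_C3 hN, hskew]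
  have hsinα : 0 < sin α := sin_pos_of_pos_of_lt_pi hα.1 hα.2
  have hsinβ : 0 < sin β := sin_pos_of_pos_of_lt_pi hβ.1 hβ.2
  rcases le_or_gt 0 (cos α) with hcosα | hcosα
  · have hsin : 0 < sin (α + β) := sin_pos_of_pos_of_lt_pi (by linarith [hα.1, hβ.1]) hsum
    rw [sin_add] at hsin
    nlinarith [mul_nonneg hcosα (mul_nonneg hsinβ.le (sub_nonneg.2 hc))]
  · have hcos : 0 < cos α + cos β := by
      have h := cos_lt_cos_of_nonneg_of_le_pi hα.1.le (by linarith [hβ.1]) (by linarith : α < π - β)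
      rw [cos_pi_sub] at h
      linarith
    -- multiplied by `sin α`, the trace bound turns the expression into at least `2 (cos α + cos β)`
    have : 0 < sin α * (sin α * (2 * cos β) + cos α * (sin β * c)) := by
      nlinarith [mul_le_mul_of_nonpos_left htr hcosα.le, sin_sq_add_cos_sq α]
    exact pos_of_mul_pos_right this hsinα.le

end Product

theorem prod_C3_C3_small (α β : ℝ) (hα : α ∈ Set.Ioo 0 π) (hβ : β ∈ Set.Ioo 0 π)
    (hsum : α + β < π) (A B : SL2R) (hA : A ∈ C3 α) (hB : B ∈ C3 β) :
    (∀ γ : ℝ, π < γ → γ < 2 * π → A * B ∉ C3 γ) ∧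
    A * B ≠ 1 ∧ A * B ≠ -1 ∧
    (∀ γ : ℝ, 0 < γ → γ < π → A * B ∈ C3 γ → α + β ≤ γ) := by
  obtain ⟨g, hg⟩ := hA
  set M := g⁻¹ * (A * B) * g
  have hM : M.val = Rot α * (g⁻¹ * B * g).val := by
    rw [show M = g⁻¹ * A * g * (g⁻¹ * B * g) by simp only [M]; group,
      ← val_inv_mul_mul_of_val_eq hg]
    rfl
  have hMC3 {γ : ℝ} (h : A * B ∈ C3 γ) : M ∈ C3 γ := by simpa using conj_mem_C3 h g⁻¹
  have hN : g⁻¹ * B * g ∈ C3 β := by simpa using conj_mem_C3 hB g⁻¹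
  have htr : trace M.val ≤ 2 * cos (α + β) := hM ▸
    trace_Rot_mul_le (sin_nonneg_of_nonneg_of_le_pi hα.1.le hα.2.le)
      (sin_nonneg_of_nonneg_of_le_pi hβ.1.le hβ.2.le) hN
  have hskew (h : -2 ≤ trace M.val) : 0 < skewTrace M.val :=
    hM ▸ skewTrace_Rot_mul_pos hα hβ hsum hN (hM ▸ h)
  refine ⟨fun γ hγπ hγ2π hAB => ?_, fun hAB => ?_, fun hAB => ?_, fun γ hγ0 hγπ hAB => ?_⟩
  · obtain ⟨c, hc, hc'⟩ := exists_skewTrace_eq_of_mem_C3 (hMC3 hAB)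
    have hsin : sin γ < 0 := by
      simpa using sin_neg_of_neg_of_neg_pi_lt (by linarith : γ - 2 * π < 0) (by linarith)
    have hpos := hskew (by rw [trace_eq_of_mem_C3 (hMC3 hAB)]; linarith [neg_one_le_cos γ])
    nlinarith
  · have : cos (α + β) < 1 := by
      simpa using cos_lt_cos_of_nonneg_of_le_pi le_rfl hsum.le (by linarith [hα.1, hβ.1])
    have htr1 : trace M.val = 2 := by simp [M, hAB]
    linarith
  · simpa [M, hAB, skewTrace] using hskew (by simp [M, hAB])
  · by_contra! hlt
    have hcos := cos_lt_cos_of_nonneg_of_le_pi hγ0.le hsum.le hlt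
    linarith [trace_eq_of_mem_C3 (hMC3 hAB)]
end

section
/- In PSL₂(ℝ), the square of the conjugacy class of the image of diag(λ, λ⁻¹) (λ > 1) is the whole group: for every g ∈ PSL₂(ℝ) there exist h₁, h₂ in that conjugacy class with h₁h₂ = g. -/
/-!
An element of `SL₂(K)` with trace `λ + λ⁻¹ ≠ ±2` is conjugate to `diag(λ, λ⁻¹)`: once its
lower-left entry `c` is nonzero, the eigenvectors for `λ` and `λ⁻¹` give an explicit conjugator.
Every non-central `g` is conjugate to a matrix with `c ≠ 0`, since the lower-left entry of its
conjugate by `[[1, 0], [x, 1]]` is a polynomial in `x` that vanishes identically only for scalar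
`g`. For such `g` take `A = [[λ, s], [0, λ⁻¹]]`: the trace of `A⁻¹ g` is affine in `s` with slope
`-c`, so `s` can be chosen to make it `λ + λ⁻¹`, and `g = A · (A⁻¹ g)` is a product of two
conjugates of `diag(λ, λ⁻¹)`. A central `g` is trivial in `PSL₂(ℝ)`, where it equals `d · d⁻¹`,
and `d⁻¹` has the same trace as `d`.
-/

open Matrix

/-- PSL₂(ℝ) = SL₂(ℝ)/{±I} (the center of SL₂(ℝ) is {±I}). -/
abbrev PSL2R := Matrix.SpecialLinearGroup (Fin 2) ℝ ⧸
  Subgroup.center (Matrix.SpecialLinearGroup (Fin 2) ℝ)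

theorem IsConj.exists_isConj_mul_eq {G : Type*} [Group G] {d g g' : G} (hg : IsConj g g')
    (h : ∃ h₁ h₂, IsConj d h₁ ∧ IsConj d h₂ ∧ h₁ * h₂ = g) :
    ∃ h₁ h₂, IsConj d h₁ ∧ IsConj d h₂ ∧ h₁ * h₂ = g' := by
  obtain ⟨c, rfl⟩ := isConj_iff.1 hg
  obtain ⟨h₁, h₂, hd₁, hd₂, rfl⟩ := h
  exact ⟨c * h₁ * c⁻¹, c * h₂ * c⁻¹, hd₁.trans (isConj_iff.2 ⟨c, rfl⟩),
    hd₂.trans (isConj_iff.2 ⟨c, rfl⟩), by group⟩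

namespace Matrix.SpecialLinearGroup

open MatrixGroups

theorem trace_eq_of_isConj {n R : Type*} [Fintype n] [DecidableEq n] [CommRing R]
    {A B : SpecialLinearGroup n R} (h : IsConj A B) :
    trace (A : Matrix n n R) = trace (B : Matrix n n R) := by
  obtain ⟨P, rfl⟩ := isConj_iff.1 h
  rw [coe_mul, coe_mul, trace_mul_comm, ← mul_assoc, ← coe_mul, inv_mul_cancel, coe_one, one_mul]

variable {K : Type*} [Field K]

theorem transvection_conj_apply_one_zero (G : SL(2, K)) (x : K) :
    (transvection (one_ne_zero : (1 : Fin 2) ≠ 0) x * G * (transvection one_ne_zero x)⁻¹ :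
      SL(2, K)) 1 0 = G 1 0 + (G 0 0 - G 1 1) * x - G 0 1 * x ^ 2 := by
  rw [transvection_inv]
  simp [transvection_coe, coe_mul, mul_apply, Fin.sum_univ_two]
  ring

theorem mem_center_of_scalar_entries (G : SL(2, K)) (hb : G 0 1 = 0) (hc : G 1 0 = 0)
    (had : G 0 0 = G 1 1) : G ∈ Subgroup.center SL(2, K) := by
  refine mem_center_iff.2 ⟨G 0 0, ?_, ?_⟩
  · have hdet := G.2
    rw [det_fin_two, hb, hc, ← had] at hdet
    simpa [sq] using hdet
  · ext i j
    fin_cases i <;> fin_cases j <;> simp [hb, hc, had]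

open Polynomial in
theorem exists_isConj_apply_one_zero_ne_zero [Infinite K] {G : SL(2, K)}
    (hG : G ∉ Subgroup.center SL(2, K)) : ∃ G', IsConj G G' ∧ G' 1 0 ≠ 0 := by
  by_contra! h
  have hpoly : (C (G 1 0) + C (G 0 0 - G 1 1) * X - C (G 0 1) * X ^ 2 : K[X]) = 0 :=
    Polynomial.funext fun x => by
      simpa [transvection_conj_apply_one_zero] using
        h _ (isConj_iff.2 ⟨transvection one_ne_zero x, rfl⟩)
  refine hG (mem_center_of_scalar_entries G ?_ ?_ ?_)
  · simpa using congrArg (coeff · 2) hpoly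
  · simpa using congrArg (coeff · 0) hpoly
  · simpa [sub_eq_zero] using congrArg (coeff · 1) hpoly

theorem trace_ne_of_mem_center {l : K} (hl : l ≠ l⁻¹) {M : SL(2, K)}
    (hM : M ∈ Subgroup.center SL(2, K)) : trace (M : Matrix (Fin 2) (Fin 2) K) ≠ l + l⁻¹ := by
  obtain ⟨r, hr, hrM⟩ := mem_center_iff.1 hM
  rw [← hrM, trace_fin_two]
  intro htr
  simp only [scalar_apply, diagonal_apply_eq, Fintype.card_fin] at htr hr
  have hll : l * l⁻¹ = 1 := mul_inv_cancel₀ (by rintro rfl; simp at hl)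
  have hlr : l = r := sub_eq_zero.1 <| pow_eq_zero_iff two_ne_zero |>.1 <| by
    linear_combination (-l) * htr - hll + hr
  exact hl (by linear_combination 2 * hlr + htr)

theorem isConj_of_trace_eq_of_apply_one_zero_ne_zero {l : K} (hl : l ≠ l⁻¹) {D M : SL(2, K)}
    (hD : (D : Matrix (Fin 2) (Fin 2) K) = !![l, 0; 0, l⁻¹])
    (hM : trace (M : Matrix (Fin 2) (Fin 2) K) = l + l⁻¹) (hc : M 1 0 ≠ 0) : IsConj D M := by
  have hll : l * l⁻¹ = 1 := mul_inv_cancel₀ (by rintro rfl; simp at hl)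
  have hδ : l - l⁻¹ ≠ 0 := sub_ne_zero.2 hl
  set m := l⁻¹
  clear_value m
  have hdet := det_coe M
  rw [det_fin_two] at hdet
  rw [trace_fin_two] at hM
  -- the columns are eigenvectors of `M` for `l` and `m`, scaled to make the determinant `1`
  let P : SL(2, K) := ⟨!![(l - M 1 1) / (l - m), (m - M 1 1) / M 1 0; M 1 0 / (l - m), 1],
    by rw [det_fin_two_of]; field_simp; ring⟩
  refine isConj_iff.2 ⟨P, mul_inv_eq_iff_eq_mul.2 (Subtype.ext ?_)⟩
  rw [coe_mul, coe_mul, hD, eta_fin_two (M : Matrix (Fin 2) (Fin 2) K)]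
  simp only [P, mul_fin_two, EmbeddingLike.apply_eq_iff_eq, vecCons_inj, and_true]
  refine ⟨⟨?_, ?_⟩, ?_, ?_⟩ <;> field_simp
  · linear_combination M 1 0 * ((-l) * hM + hdet - hll)
  · linear_combination (l - m) * ((-m) * hM + hdet - hll)
  · ring
  · ring

theorem isConj_of_trace_eq [Infinite K] {l : K} (hl : l ≠ l⁻¹) {D M : SL(2, K)}
    (hD : (D : Matrix (Fin 2) (Fin 2) K) = !![l, 0; 0, l⁻¹])
    (hM : trace (M : Matrix (Fin 2) (Fin 2) K) = l + l⁻¹) : IsConj D M := by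
  obtain ⟨M', hMM', hc⟩ := exists_isConj_apply_one_zero_ne_zero (trace_ne_of_mem_center hl · hM)
  exact (isConj_of_trace_eq_of_apply_one_zero_ne_zero hl hD
    ((trace_eq_of_isConj hMM').symm.trans hM) hc).trans hMM'.symm

theorem exists_trace_eq_and_trace_inv_mul_eq {l : K} (hl : l ≠ 0) (u : K) {G : SL(2, K)}
    (hc : G 1 0 ≠ 0) :
    ∃ A : SL(2, K), trace (A : Matrix (Fin 2) (Fin 2) K) = l + l⁻¹ ∧
      trace ((A⁻¹ * G : SL(2, K)) : Matrix (Fin 2) (Fin 2) K) = u := by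
  let A : SL(2, K) := ⟨!![l, (l⁻¹ * G 0 0 + l * G 1 1 - u) / G 1 0; 0, l⁻¹], by simp [hl]⟩
  refine ⟨A, by simp [A], ?_⟩
  rw [coe_mul, coe_inv, eta_fin_two (G : Matrix (Fin 2) (Fin 2) K)]
  simp only [A, adjugate_fin_two_of, mul_fin_two, trace_fin_two_of]
  field_simp
  ring

end Matrix.SpecialLinearGroup

open MatrixGroups Matrix.SpecialLinearGroup

theorem hyperbolic_class_square_eq_univ (l : ℝ) (hl : 1 < l)
    (D : Matrix.SpecialLinearGroup (Fin 2) ℝ) (hD : D.val = !![l, 0; 0, l⁻¹])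
    (d : PSL2R) (hd : d = QuotientGroup.mk D) :
    ∀ g : PSL2R, ∃ h₁ h₂ : PSL2R, IsConj d h₁ ∧ IsConj d h₂ ∧ h₁ * h₂ = g := by
  subst hd
  have hl' : l ≠ l⁻¹ := ((inv_lt_one_of_one_lt₀ hl).trans hl).ne'
  have hclass (M : SL(2, ℝ)) (hM : trace (M : Matrix (Fin 2) (Fin 2) ℝ) = l + l⁻¹) :
      IsConj (QuotientGroup.mk D : PSL2R) (QuotientGroup.mk M) :=
    (QuotientGroup.mk' _).map_isConj (isConj_of_trace_eq hl' hD hM)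
  intro g
  obtain ⟨G, rfl⟩ := QuotientGroup.mk_surjective g
  by_cases hG : G ∈ Subgroup.center SL(2, ℝ)
  · refine ⟨_, QuotientGroup.mk D⁻¹, IsConj.refl _, hclass _ ?_, ?_⟩
    · simp [coe_inv, hD, adjugate_fin_two_of, add_comm]
    · rw [← QuotientGroup.mk_mul, mul_inv_cancel, (QuotientGroup.eq_one_iff G).2 hG]
      rfl
  · obtain ⟨G', hGG', hc⟩ := exists_isConj_apply_one_zero_ne_zero hG
    obtain ⟨A, hA, hAG⟩ := exists_trace_eq_and_trace_inv_mul_eq (by positivity) _ hc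
    refine ((QuotientGroup.mk' _).map_isConj hGG').symm.exists_isConj_mul_eq ?_
    exact ⟨_, _, hclass A hA, hclass _ hAG,
      by rw [← QuotientGroup.mk_mul, mul_inv_cancel_left]; rfl⟩
end

section
/- In SL₂(ℝ), the triple product of conjugacy classes C₂^{++} · C₂^{++} · C₂^{++} equals SL₂(ℝ) \ {I}: every matrix except the identity is a product of three matrices each conjugate to [[1,0],[1,1]], and I is not. -/
open Matrix

/-!
Every element of `C2pp` is `I + N` with `N = [[q s, -q²], [s², -q s]]` and `(q, s) ≠ 0`. If a
product of three of them were `I`, then `(I + N₁)(I + N₂) = (I + N₃)⁻¹` would have trace `2`,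
forcing `q₁ s₂ = s₁ q₂`; comparing `M 1 0 - M 0 1` on both sides then makes a sum of squares
vanish.

Conversely, write `L(a) = [[1, 0], [a, 1]]`, which lies in `C2pp` for `a > 0`. The entry
`(g X g⁻¹) 0 1` is a binary quadratic form in the first row of `g`, of discriminant
`tr(X)² - 4`. A matrix `Y` of trace `< 2` with `Y 0 1 < 0` is `L(t) B` with `tr B = 2`, `B 0 1 < 0`,
hence `B ∈ C2pp`; so `Y ∈ C2pp²`, and by conjugation the same holds whenever the form of `Y` takes
a negative value. Both sides being conjugation invariant, if the form of `X` takes a positive value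
we may assume `X 0 1 > 0`; then `L(a)⁻¹ X` has trace `< -2` for large `a`, its form is
indefinite, and `X ∈ L(a) C2pp²`. Otherwise the form of `X` is negative semidefinite, so
`tr X ≤ 2` and `X 0 1 ≤ 0 ≤ X 1 0`: then `X ≠ I` lies in `C2pp` or `C2pp²`, or in `L(1) C2pp²`
when `X 0 1 = 0`. Finally `C2pp ⊆ C2pp²` because `L(1) = L(1/2)²`.
-/

open Pointwise

theorem conj_mem_mul {G : Type*} [Group G] {s t : Set G}
    (hs : ∀ g, ∀ a ∈ s, g * a * g⁻¹ ∈ s) (ht : ∀ g, ∀ b ∈ t, g * b * g⁻¹ ∈ t) :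
    ∀ g, ∀ x ∈ s * t, g * x * g⁻¹ ∈ s * t := by
  rintro g _ ⟨a, ha, b, hb, rfl⟩
  exact ⟨g * a * g⁻¹, hs g a ha, g * b * g⁻¹, ht g b hb, by group⟩

theorem mem_of_conj_mem {G : Type*} [Group G] {s : Set G}
    (hs : ∀ g, ∀ a ∈ s, g * a * g⁻¹ ∈ s) {g x : G} (hx : g * x * g⁻¹ ∈ s) : x ∈ s := by
  simpa [mul_assoc] using hs g⁻¹ _ hx

theorem exists_quadratic_neg_of_discrim_pos {a b c : ℝ} (h : 0 < discrim a b c) :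
    ∃ x, a * (x * x) + b * x + c < 0 := by
  by_contra! hx
  exact (discrim_le_zero hx).not_gt h

namespace SL2R

def lower (a : ℝ) : SL2R := ⟨!![1, 0; a, 1], by simp⟩

@[simp] lemma coe_lower (a : ℝ) : (lower a : Matrix (Fin 2) (Fin 2) ℝ) = !![1, 0; a, 1] := rfl

lemma lower_mul_lower (a b : ℝ) : lower a * lower b = lower (a + b) := by
  ext i j; fin_cases i <;> fin_cases j <;> simp

lemma lower_inv (a : ℝ) : (lower a)⁻¹ = lower (-a) := by
  ext i j; fin_cases i <;> fin_cases j <;> simp [adjugate_fin_two]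

def posTransvection (q s : ℝ) : SL2R :=
  ⟨!![1 + q * s, -q ^ 2; s ^ 2, 1 - q * s], by simp [det_fin_two_of]; ring⟩

@[simp] lemma coe_posTransvection (q s : ℝ) :
    (posTransvection q s : Matrix (Fin 2) (Fin 2) ℝ) = !![1 + q * s, -q ^ 2; s ^ 2, 1 - q * s] :=
  rfl

lemma det_fin_two_eq_one (X : SL2R) : X 0 0 * X 1 1 - X 0 1 * X 1 0 = 1 := by
  rw [← det_fin_two]; exact X.2

lemma trace_conj (g X : SL2R) : (g * X * g⁻¹) 0 0 + (g * X * g⁻¹) 1 1 = X 0 0 + X 1 1 := by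
  simp [mul_apply, Fin.sum_univ_two, adjugate_fin_two]
  linear_combination (X 0 0 + X 1 1) * det_fin_two_eq_one g

lemma conj_apply_zero_one (g X : SL2R) : (g * X * g⁻¹) 0 1 =
    X 0 1 * g 0 0 ^ 2 + (X 1 1 - X 0 0) * g 0 0 * g 0 1 - X 1 0 * g 0 1 ^ 2 := by
  simp [mul_apply, Fin.sum_univ_two, adjugate_fin_two]
  ring

lemma exists_conj_apply_zero_one_eq (X : SL2R) (r : ℝ) :
    ∃ g : SL2R, (g * X * g⁻¹) 0 1 = X 0 1 + (X 1 1 - X 0 0) * r - X 1 0 * r ^ 2 := by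
  obtain ⟨g, hg0, hg1⟩ := (isCoprime_one_left : IsCoprime 1 r).exists_SL2_row 0
  exact ⟨g, by rw [conj_apply_zero_one, hg0, hg1]; ring⟩

lemma exists_conj_apply_zero_one_eq_neg (X : SL2R) :
    ∃ g : SL2R, (g * X * g⁻¹) 0 1 = -X 1 0 := by
  obtain ⟨g, hg0, hg1⟩ := (isCoprime_one_right : IsCoprime (0 : ℝ) 1).exists_SL2_row 0
  exact ⟨g, by rw [conj_apply_zero_one, hg0, hg1]; ring⟩

lemma exists_conj_apply_zero_one_neg {X : SL2R} (h : 4 < (X 0 0 + X 1 1) ^ 2) :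
    ∃ g : SL2R, (g * X * g⁻¹) 0 1 < 0 := by
  obtain ⟨r, hr⟩ :=
    exists_quadratic_neg_of_discrim_pos (a := -X 1 0) (b := X 1 1 - X 0 0) (c := X 0 1)
    (by rw [discrim]; linear_combination h + 4 * det_fin_two_eq_one X)
  obtain ⟨g, hg⟩ := exists_conj_apply_zero_one_eq X r
  exact ⟨g, by rw [hg]; linarith⟩

lemma sq_trace_le_four_of_conj_nonpos {X : SL2R} (h : ∀ g : SL2R, (g * X * g⁻¹) 0 1 ≤ 0) :
    (X 0 0 + X 1 1) ^ 2 ≤ 4 := by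
  have := discrim_le_zero (a := X 1 0) (b := X 0 0 - X 1 1) (c := -X 0 1) fun r => by
    obtain ⟨g, hg⟩ := exists_conj_apply_zero_one_eq X r
    linarith [h g]
  rw [discrim] at this
  linear_combination this + 4 * det_fin_two_eq_one X

lemma conj_lower_one (g : SL2R) : g * lower 1 * g⁻¹ = posTransvection (g 0 1) (g 1 1) := by
  have := det_fin_two_eq_one g
  ext i j; fin_cases i <;> fin_cases j <;>
    simp [mul_apply, Fin.sum_univ_two, adjugate_fin_two] <;> linarith

lemma mem_C2pp_iff_exists_conj {A : SL2R} : A ∈ C2pp ↔ ∃ g : SL2R, A = g * lower 1 * g⁻¹ :=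
  exists_congr fun g => (Subtype.ext_iff (a1 := A) (a2 := g * lower 1 * g⁻¹)).symm

lemma mem_C2pp_iff {A : SL2R} : A ∈ C2pp ↔ ∃ q s, IsCoprime q s ∧ A = posTransvection q s := by
  rw [mem_C2pp_iff_exists_conj]
  constructor
  · rintro ⟨g, rfl⟩
    exact ⟨g 0 1, g 1 1, SpecialLinearGroup.isCoprime_col g 1, conj_lower_one g⟩
  · rintro ⟨q, s, hqs, rfl⟩
    obtain ⟨g, hq, hs⟩ := hqs.exists_SL2_col 1
    exact ⟨g, by rw [conj_lower_one, hq, hs]⟩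

lemma conj_mem_C2pp : ∀ g, ∀ A ∈ C2pp, g * A * g⁻¹ ∈ C2pp := by
  simp only [mem_C2pp_iff_exists_conj]
  rintro g _ ⟨h, rfl⟩
  exact ⟨g * h, by group⟩

lemma conj_mem_mul_self : ∀ g, ∀ A ∈ C2pp * C2pp, g * A * g⁻¹ ∈ C2pp * C2pp :=
  conj_mem_mul conj_mem_C2pp conj_mem_C2pp

lemma conj_mem_cube : ∀ g, ∀ A ∈ C2pp * C2pp * C2pp, g * A * g⁻¹ ∈ C2pp * C2pp * C2pp :=
  conj_mem_mul conj_mem_mul_self conj_mem_C2pp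

lemma lower_mem_C2pp {a : ℝ} (ha : 0 < a) : lower a ∈ C2pp := by
  have hs : √a ≠ 0 := (Real.sqrt_pos.mpr ha).ne'
  refine mem_C2pp_iff.mpr ⟨0, √a, ⟨0, (√a)⁻¹, by simp [hs]⟩, ?_⟩
  ext i j; fin_cases i <;> fin_cases j <;> simp [ha.le]

lemma mem_C2pp_of_trace_eq_two_of_zero_one_neg {X : SL2R} (ht : X 0 0 + X 1 1 = 2)
    (hy : X 0 1 < 0) : X ∈ C2pp := by
  set q := √(-X 0 1)
  have hq2 : q ^ 2 = -X 0 1 := Real.sq_sqrt (by linarith)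
  have hq : q ≠ 0 := (Real.sqrt_pos.mpr (by linarith)).ne'
  have hx : (X 0 0 - 1) ^ 2 = -(X 0 1 * X 1 0) := by
    linear_combination X 0 0 * ht - det_fin_two_eq_one X
  refine mem_C2pp_iff.mpr ⟨q, (X 0 0 - 1) / q, ⟨q⁻¹, 0, by simp [hq]⟩, ?_⟩
  ext i j; fin_cases i <;> fin_cases j
  · simp; field_simp; ring
  · simp [hq2]
  · simp; field_simp; linear_combination X 1 0 * hq2 - hx
  · simp; field_simp; linarith

lemma mem_C2pp_of_trace_eq_two {X : SL2R} (ht : X 0 0 + X 1 1 = 2) (hy : X 0 1 ≤ 0)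
    (hz : 0 ≤ X 1 0) (hX : X ≠ 1) : X ∈ C2pp := by
  rcases hy.lt_or_eq with hy | hy
  · exact mem_C2pp_of_trace_eq_two_of_zero_one_neg ht hy
  have hz : 0 < X 1 0 := by
    refine hz.lt_of_ne fun hz0 => hX ?_
    have hx : X 0 0 = 1 := by nlinarith [det_fin_two_eq_one X]
    ext i j; fin_cases i <;> fin_cases j <;> simp <;> linarith
  obtain ⟨g, hg⟩ := exists_conj_apply_zero_one_eq_neg X
  exact mem_of_conj_mem (g := g) conj_mem_C2pp
    (mem_C2pp_of_trace_eq_two_of_zero_one_neg (by rw [trace_conj, ht]) (by rw [hg]; linarith))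

lemma C2pp_subset_mul_self : C2pp ⊆ C2pp * C2pp := by
  intro A hA
  obtain ⟨g, rfl⟩ := mem_C2pp_iff_exists_conj.mp hA
  have hhalf := conj_mem_C2pp g _ (lower_mem_C2pp (a := 1 / 2) (by norm_num))
  refine ⟨_, hhalf, _, hhalf, ?_⟩
  rw [show lower 1 = lower (1 / 2) * lower (1 / 2) by rw [lower_mul_lower]; norm_num]
  group

lemma mul_self_subset_cube : C2pp * C2pp ⊆ C2pp * C2pp * C2pp :=
  Set.mul_subset_mul_right C2pp_subset_mul_self

lemma mem_mul_self_of_trace_lt_two_of_zero_one_neg {X : SL2R} (ht : X 0 0 + X 1 1 < 2)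
    (hy : X 0 1 < 0) : X ∈ C2pp * C2pp := by
  set t := (X 0 0 + X 1 1 - 2) / X 0 1
  have ht0 : 0 < t := div_pos_of_neg_of_neg (by linarith) hy
  have hty : t * X 0 1 = X 0 0 + X 1 1 - 2 := div_mul_cancel₀ _ hy.ne
  refine ⟨lower t, lower_mem_C2pp ht0, (lower t)⁻¹ * X,
    mem_C2pp_of_trace_eq_two_of_zero_one_neg ?_ ?_, mul_inv_cancel_left _ _⟩
  · simp [lower_inv, mul_apply, Fin.sum_univ_two]; linarith
  · simpa [lower_inv, mul_apply, Fin.sum_univ_two] using hy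

lemma mem_mul_self_of_trace_lt_two_of_conj_neg {X : SL2R} (ht : X 0 0 + X 1 1 < 2)
    (h : ∃ g : SL2R, (g * X * g⁻¹) 0 1 < 0) : X ∈ C2pp * C2pp := by
  obtain ⟨g, hg⟩ := h
  exact mem_of_conj_mem conj_mem_mul_self
    (mem_mul_self_of_trace_lt_two_of_zero_one_neg (by rw [trace_conj]; exact ht) hg)

lemma mem_cube_of_zero_one_pos {X : SL2R} (hy : 0 < X 0 1) : X ∈ C2pp * C2pp * C2pp := by
  set a := (|X 0 0 + X 1 1| + 3) / X 0 1
  have ha : 0 < a := by positivity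
  have hay : a * X 0 1 = |X 0 0 + X 1 1| + 3 := div_mul_cancel₀ _ hy.ne'
  have htr : ((lower a)⁻¹ * X) 0 0 + ((lower a)⁻¹ * X) 1 1 < -2 := by
    simp [lower_inv, mul_apply, Fin.sum_univ_two]; linarith [le_abs_self (X 0 0 + X 1 1)]
  rw [← mul_inv_cancel_left (lower a) X, mul_assoc]
  exact Set.mul_mem_mul (lower_mem_C2pp ha)
    (mem_mul_self_of_trace_lt_two_of_conj_neg (by linarith)
      (exists_conj_apply_zero_one_neg (by nlinarith)))

lemma mem_cube_of_trace_lt_two_of_zero_one_eq_zero {X : SL2R} (ht : X 0 0 + X 1 1 < 2)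
    (hy : X 0 1 = 0) (hz : 0 ≤ X 1 0) : X ∈ C2pp * C2pp * C2pp := by
  have hxw : X 0 0 * X 1 1 = 1 := by simpa [hy] using det_fin_two_eq_one X
  have hx : X 0 0 < 0 := by
    by_contra! hx
    have hx0 : 0 < X 0 0 := hx.lt_of_ne fun h => by simp [← h] at hxw
    nlinarith [mul_pos hx0 (sub_pos.2 ht), sq_nonneg (X 0 0 - 1)]
  rw [← mul_inv_cancel_left (lower 1) X, mul_assoc]
  refine Set.mul_mem_mul (lower_mem_C2pp one_pos) (mem_mul_self_of_trace_lt_two_of_conj_neg ?_ ?_)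
  · simp [lower_inv, mul_apply, Fin.sum_univ_two, hy]; linarith
  · obtain ⟨g, hg⟩ := exists_conj_apply_zero_one_eq_neg ((lower 1)⁻¹ * X)
    refine ⟨g, ?_⟩
    rw [hg]; simp [lower_inv, mul_apply, Fin.sum_univ_two]; linarith

lemma mem_cube_of_conj_nonpos {X : SL2R} (hX : X ≠ 1)
    (h : ∀ g : SL2R, (g * X * g⁻¹) 0 1 ≤ 0) : X ∈ C2pp * C2pp * C2pp := by
  have hy : X 0 1 ≤ 0 := by simpa using h 1
  have hz : 0 ≤ X 1 0 := by
    obtain ⟨g, hg⟩ := exists_conj_apply_zero_one_eq_neg X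
    linarith [h g]
  have htr : X 0 0 + X 1 1 ≤ 2 := by nlinarith [sq_trace_le_four_of_conj_nonpos h]
  rcases htr.lt_or_eq with htr | htr
  · rcases hy.lt_or_eq with hy | hy
    · exact mul_self_subset_cube (mem_mul_self_of_trace_lt_two_of_zero_one_neg htr hy)
    · exact mem_cube_of_trace_lt_two_of_zero_one_eq_zero htr hy hz
  · exact mul_self_subset_cube (C2pp_subset_mul_self (mem_C2pp_of_trace_eq_two htr hy hz hX))

lemma mem_cube_of_ne_one {X : SL2R} (hX : X ≠ 1) : X ∈ C2pp * C2pp * C2pp := by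
  by_cases h : ∃ g : SL2R, 0 < (g * X * g⁻¹) 0 1
  · obtain ⟨g, hg⟩ := h
    exact mem_of_conj_mem conj_mem_cube (mem_cube_of_zero_one_pos hg)
  · simp only [not_exists, not_lt] at h
    exact mem_cube_of_conj_nonpos hX h

lemma posTransvection_mul_ne_inv {q₁ s₁ : ℝ} (h : q₁ ≠ 0 ∨ s₁ ≠ 0) (q₂ s₂ q₃ s₃ : ℝ) :
    posTransvection q₁ s₁ * posTransvection q₂ s₂ ≠ (posTransvection q₃ s₃)⁻¹ := by
  intro he
  have e := fun i j => congrFun (congrFun (congrArg Subtype.val he) i) j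
  have e00 := e 0 0
  have e01 := e 0 1
  have e10 := e 1 0
  have e11 := e 1 1
  simp [mul_apply, Fin.sum_univ_two, adjugate_fin_two] at e00 e01 e10 e11
  have hδ : q₁ * s₂ - s₁ * q₂ = 0 := pow_eq_zero_iff two_ne_zero |>.mp <| by
    linear_combination -(e00 + e11)
  have hsum : q₁ ^ 2 + s₁ ^ 2 + q₂ ^ 2 + s₂ ^ 2 + q₃ ^ 2 + s₃ ^ 2 = 0 := by
    linear_combination e10 - e01 + (q₁ * q₂ + s₁ * s₂) * hδ
  have : 0 < q₁ ^ 2 + s₁ ^ 2 := by rcases h with h | h <;> positivity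
  nlinarith [sq_nonneg q₂, sq_nonneg s₂, sq_nonneg q₃, sq_nonneg s₃]

lemma one_notMem_cube : (1 : SL2R) ∉ C2pp * C2pp * C2pp := by
  rintro ⟨_, ⟨A, hA, B, hB, rfl⟩, D, hD, hABD⟩
  obtain ⟨q₁, s₁, h₁, rfl⟩ := mem_C2pp_iff.mp hA
  obtain ⟨q₂, s₂, -, rfl⟩ := mem_C2pp_iff.mp hB
  obtain ⟨q₃, s₃, -, rfl⟩ := mem_C2pp_iff.mp hD
  exact posTransvection_mul_ne_inv h₁.ne_zero_or_ne_zero _ _ _ _ (eq_inv_of_mul_eq_one_left hABD)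

end SL2R

theorem triple_product_C2pp :
    {X : SL2R | ∃ A ∈ C2pp, ∃ B ∈ C2pp, ∃ C ∈ C2pp, X = A * B * C} = {1}ᶜ := by
  have hcube : {X : SL2R | ∃ A ∈ C2pp, ∃ B ∈ C2pp, ∃ C ∈ C2pp, X = A * B * C} =
      C2pp * C2pp * C2pp := by
    ext X
    constructor
    · rintro ⟨A, hA, B, hB, C, hC, rfl⟩
      exact Set.mul_mem_mul (Set.mul_mem_mul hA hB) hC
    · rintro ⟨_, ⟨A, hA, B, hB, rfl⟩, C, hC, rfl⟩
      exact ⟨A, hA, B, hB, C, hC, rfl⟩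
  rw [hcube]
  ext X
  exact ⟨fun hX h1 => SL2R.one_notMem_cube (h1 ▸ hX), SL2R.mem_cube_of_ne_one⟩
end
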